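/- arXiv:1210.6071 — 2 statements merged into one kernel-verified Lean document; each statement's English description precedes it below -/
import Mathlib

section
/- For f in the Schwartz space on ℝⁿ and a unit vector u ∈ Sⁿ⁻¹, the Euclidean Fourier transform of f evaluated at ru (r ∈ ℝ) equals, up to the standard normalizing constant, the one-dimensional Fourier transform in s of the hyperplane Radon transform ŝ ↦ ∫_{⟨x,u⟩=s} f(x) dx; i.e. 𝓕f(ru) = c ∫_ℝ (∫_{⟨x,u⟩=s} f dσ) e^{-isr} ds (Fourier slice theorem). -/
/-! Writing `x = s • u + w` with `w ⊥ u` is a measure-preserving change of variables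
`ℝ × (ℝ ∙ u)ᗮ ≃ ℝⁿ` (an isometry followed by the `L²`-product splitting). In these coordinates
the character `exp (-i⟪x, r • u⟫)` becomes `exp (-isr)`, independent of `w`, so Fubini turns the
`n`-dimensional integral into the integral over `s` of the hyperplane integrals. -/

open MeasureTheory Complex
open scoped RealInnerProductSpace

/-- The hyperplane Radon transform: the integral of `f` over the affine hyperplane
`{x : ⟪x, u⟫ = s}` (with unit normal `u` and distance parameter `s`), with respect to
Lebesgue measure on that hyperplane, parametrized by the orthogonal complement of `u`. -/
noncomputable def radonTransform {n : ℕ} (f : EuclideanSpace ℝ (Fin n) → ℂ)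
    (u : EuclideanSpace ℝ (Fin n)) (s : ℝ) : ℂ :=
  ∫ v : ((ℝ ∙ u)ᗮ : Submodule ℝ (EuclideanSpace ℝ (Fin n))), f (s • u + (v : EuclideanSpace ℝ (Fin n)))

/-- The Euclidean Fourier transform with the convention `𝓕f(ξ) = ∫ f(x) e^{-i⟪x,ξ⟫} dx`. -/
noncomputable def euclideanFourier {n : ℕ} (f : EuclideanSpace ℝ (Fin n) → ℂ)
    (ξ : EuclideanSpace ℝ (Fin n)) : ℂ :=
  ∫ x : EuclideanSpace ℝ (Fin n), f x * Complex.exp (-(Complex.I * (⟪x, ξ⟫ : ℝ)))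

theorem inner_smul_add_orthogonal_smul {E : Type*} [NormedAddCommGroup E] [InnerProductSpace ℝ E]
    {u : E} (hu : ‖u‖ = 1) (s r : ℝ) {w : E} (hw : w ∈ (ℝ ∙ u)ᗮ) :
    ⟪s • u + w, r • u⟫ = s * r := by
  rw [inner_add_left, real_inner_smul_left, real_inner_smul_right, real_inner_self_eq_norm_sq, hu,
    real_inner_smul_right, Submodule.mem_orthogonal_singleton_iff_inner_left.mp hw]
  ring

section UnitNormal

variable {E : Type*} [NormedAddCommGroup E] [InnerProductSpace ℝ E] [FiniteDimensional ℝ E]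
  [MeasurableSpace E] [BorelSpace E] {u : E}

noncomputable def unitNormalCoordinates (u : E) (hu : ‖u‖ = 1) : ℝ × (ℝ ∙ u)ᗮ ≃ᵐ E :=
  ((LinearIsometryEquiv.toSpanUnitSingleton u hu).toHomeomorph.toMeasurableEquiv.prodCongr
    (.refl _)).trans ((ℝ ∙ u).measurableEquivProd (0 : E)).symm

@[simp]
theorem unitNormalCoordinates_apply (hu : ‖u‖ = 1) (p : ℝ × (ℝ ∙ u)ᗮ) :
    unitNormalCoordinates u hu p = p.1 • u + p.2 := by
  simp [unitNormalCoordinates, MeasurableEquiv.prodCongr]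

theorem measurePreserving_unitNormalCoordinates (hu : ‖u‖ = 1) :
    MeasurePreserving (unitNormalCoordinates u hu) := by
  have h := ((ℝ ∙ u).measurePreserving_measurableEquivProd (0 : E)).symm
  rw [InnerProductSpace.euclideanHausdorffMeasure_eq_volume] at h
  exact h.comp ((LinearIsometryEquiv.toSpanUnitSingleton u hu).measurePreserving.prod
    (MeasurePreserving.id _))

theorem integral_eq_integral_integral_orthogonal_span_singleton {F : Type*} [NormedAddCommGroup F]
    [NormedSpace ℝ F] (hu : ‖u‖ = 1) {g : E → F} (hg : Integrable g) :
    ∫ x, g x = ∫ s : ℝ, ∫ w : (ℝ ∙ u)ᗮ, g (s • u + w) := by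
  have hφ := measurePreserving_unitNormalCoordinates hu
  rw [← hφ.integral_comp' g, Measure.volume_eq_prod, integral_prod]
  · simp
  · exact (hφ.integrable_comp_emb (unitNormalCoordinates u hu).measurableEmbedding).2 hg

theorem MeasureTheory.Integrable.mul_exp_neg_I_inner {g : E → ℂ} (hg : Integrable g) (ξ : E) :
    Integrable (fun x => g x * exp (-(I * (⟪x, ξ⟫ : ℝ)))) := by
  refine hg.mul_bdd (c := 1) (by fun_prop) (.of_forall fun x => ?_)
  rw [norm_exp]
  simp

end UnitNormal

theorem integral_radonTransform {n : ℕ} {g : EuclideanSpace ℝ (Fin n) → ℂ}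
    {u : EuclideanSpace ℝ (Fin n)} (hu : ‖u‖ = 1) (hg : Integrable g) :
    ∫ s, radonTransform g u s = ∫ x, g x :=
  (integral_eq_integral_integral_orthogonal_span_singleton hu hg).symm

theorem radonTransform_mul_exp_neg_I_inner_smul {n : ℕ} (g : EuclideanSpace ℝ (Fin n) → ℂ)
    {u : EuclideanSpace ℝ (Fin n)} (hu : ‖u‖ = 1) (r s : ℝ) :
    radonTransform (fun x => g x * exp (-(I * (⟪x, r • u⟫ : ℝ)))) u s =
      radonTransform g u s * exp (-(I * s * r)) := by
  rw [radonTransform, radonTransform, ← integral_mul_const]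
  congr with w
  rw [inner_smul_add_orthogonal_smul hu s r w.2]
  push_cast
  ring_nf

/-- **Fourier slice theorem**: for a Schwartz function `f` on `ℝⁿ` and a unit vector `u`,
the Fourier transform of `f` at `r • u` equals the one-dimensional Fourier transform in `s`
of the hyperplane Radon transform `s ↦ f̂(u, s)`, with constant `c = 1`. -/
theorem fourier_slice {n : ℕ} (f : SchwartzMap (EuclideanSpace ℝ (Fin n)) ℂ)
    (u : EuclideanSpace ℝ (Fin n)) (hu : ‖u‖ = 1) (r : ℝ) :
    euclideanFourier (fun x => f x) (r • u) =
      ∫ s : ℝ, radonTransform (fun x => f x) u s * Complex.exp (-(Complex.I * s * r)) := by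
  rw [euclideanFourier, ← integral_radonTransform hu (f.integrable.mul_exp_neg_I_inner (r • u))]
  simp_rw [radonTransform_mul_exp_neg_I_inner_smul _ hu]
end

section
/- If f : ℝⁿ → ℂ is a Schwartz function such that ∫_{ℝⁿ} f(x) p(x) dx = 0 for every polynomial p, then for every unit vector u and every polynomial q in one variable, ∫_ℝ f̂(u,s) q(s) ds = 0, where f̂ is the hyperplane Radon transform. -/
open MeasureTheory

/-!
For a unit vector `u`, the map `(s, v) ↦ s • u + v` from `ℝ × (ℝ ∙ u)ᗮ` onto `ℝⁿ` preserves
volume, so by Fubini `∫_ℝ f̂(u,s) q(s) ds = ∫_{ℝⁿ} f(x) q(⟪x,u⟫) dx`. The right-hand side is the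
moment of `f` against the polynomial `x ↦ q(∑ uᵢ xᵢ)`, hence vanishes.
-/

@[fun_prop]
theorem Polynomial.hasTemperateGrowth_eval (q : Polynomial ℝ) :
    (fun x : ℝ => q.eval x).HasTemperateGrowth := by
  simp_rw [Polynomial.eval_eq_sum_range]
  fun_prop

theorem SchwartzMap.integrable_smul_of_hasTemperateGrowth {E F 𝕜 : Type*}
    [NormedAddCommGroup E] [NormedSpace ℝ E] [MeasurableSpace E] [BorelSpace E]
    [SecondCountableTopology E] [NormedAddCommGroup F] [NormedSpace ℝ F] [RCLike 𝕜]
    [NormedSpace 𝕜 F] {μ : Measure E} [μ.HasTemperateGrowth]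
    {g : E → 𝕜} (hg : g.HasTemperateGrowth) (f : SchwartzMap E F) :
    Integrable (fun x => g x • f x) μ := by
  simpa [smulLeftCLM_apply hg] using (smulLeftCLM F g f).integrable (μ := μ)

theorem inner_smul_add_orthogonal {E : Type*} [NormedAddCommGroup E] [InnerProductSpace ℝ E]
    {u : E} (hu : ‖u‖ = 1) (s : ℝ) (v : (ℝ ∙ u)ᗮ) :
    inner ℝ (s • u + (v : E)) u = s := by
  rw [inner_add_left, real_inner_smul_left, real_inner_self_eq_norm_sq, hu,
    Submodule.mem_orthogonal_singleton_iff_inner_left.mp v.2]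
  ring

section OrthogonalSplitting

variable {E : Type*} [NormedAddCommGroup E] [InnerProductSpace ℝ E] [FiniteDimensional ℝ E]
  [MeasurableSpace E] [BorelSpace E] {u : E}

theorem measurePreserving_smul_add_orthogonal (hu : ‖u‖ = 1) :
    MeasurePreserving (fun p : ℝ × (ℝ ∙ u)ᗮ => p.1 • u + (p.2 : E)) := by
  have h := (ℝ ∙ u).orthogonalDecomposition.symm.measurePreserving.comp <|
    (WithLp.volume_preserving_toLp _ _).comp <|
      (LinearIsometryEquiv.toSpanUnitSingleton u hu).measurePreserving.prod
        (MeasurePreserving.id volume)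
  rw [← Measure.volume_eq_prod] at h
  convert h using 1
  ext p
  simp

theorem integral_eq_integral_integral_smul_add_orthogonal {F : Type*} [NormedAddCommGroup F]
    [NormedSpace ℝ F] {g : E → F} (hg : Integrable g) (hu : ‖u‖ = 1) :
    ∫ x, g x = ∫ s : ℝ, ∫ v : (ℝ ∙ u)ᗮ, g (s • u + v) := by
  have hΦ := measurePreserving_smul_add_orthogonal hu
  have hgΦ : Integrable (fun p : ℝ × (ℝ ∙ u)ᗮ => g (p.1 • u + p.2)) :=
    (hΦ.integrable_comp hg.aestronglyMeasurable).mpr hg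
  rw [← hΦ.map_eq, integral_map hΦ.aemeasurable (hΦ.map_eq ▸ hg.aestronglyMeasurable),
    Measure.volume_eq_prod, integral_prod _ hgΦ]

end OrthogonalSplitting

theorem MvPolynomial.eval_aeval_sum_smul_X {n : ℕ} (x u : EuclideanSpace ℝ (Fin n))
    (q : Polynomial ℝ) :
    MvPolynomial.eval (fun i => x i) (Polynomial.aeval (∑ i, u i • MvPolynomial.X i) q) =
      q.eval (inner ℝ x u) := by
  change MvPolynomial.aeval (fun i => x i) _ = _
  rw [← Polynomial.aeval_algHom_apply, Polynomial.coe_aeval_eq_eval]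
  simp [PiLp.inner_apply, mul_comm]

theorem integral_mul_eval_inner_eq_zero {n : ℕ} {f : EuclideanSpace ℝ (Fin n) → ℂ}
    (hf : ∀ p : MvPolynomial (Fin n) ℝ,
      ∫ x : EuclideanSpace ℝ (Fin n), f x * (MvPolynomial.eval (fun i => x i) p : ℂ) = 0)
    (u : EuclideanSpace ℝ (Fin n)) (q : Polynomial ℝ) :
    ∫ x, f x * ((q.eval (inner ℝ x u) : ℝ) : ℂ) = 0 := by
  simpa only [MvPolynomial.eval_aeval_sum_smul_X] using
    hf (Polynomial.aeval (∑ i, u i • MvPolynomial.X i) q)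

/-- If all polynomial moments of a Schwartz function `f` on `ℝⁿ` vanish, then for every
unit vector `u`, all one-dimensional polynomial moments of `s ↦ f̂(u,s)` vanish. -/
theorem radon_moments_vanish {n : ℕ} (f : SchwartzMap (EuclideanSpace ℝ (Fin n)) ℂ)
    (hf : ∀ p : MvPolynomial (Fin n) ℝ,
      ∫ x : EuclideanSpace ℝ (Fin n), f x * (MvPolynomial.eval (fun i => x i) p : ℂ) = 0)
    (u : EuclideanSpace ℝ (Fin n)) (hu : ‖u‖ = 1) (q : Polynomial ℝ) :
    ∫ s : ℝ, radonTransform (fun x => f x) u s * ((q.eval s : ℝ) : ℂ) = 0 := by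
  set g : EuclideanSpace ℝ (Fin n) → ℂ := fun x => f x * ((q.eval (inner ℝ x u) : ℝ) : ℂ)
  have hg : Integrable g := by
    simpa [g, mul_comm] using f.integrable_smul_of_hasTemperateGrowth (μ := volume)
      (g := fun x => ((q.eval (inner ℝ x u) : ℝ) : ℂ)) (by fun_prop)
  calc ∫ s : ℝ, radonTransform (fun x => f x) u s * ((q.eval s : ℝ) : ℂ)
      = ∫ s : ℝ, ∫ v : (ℝ ∙ u)ᗮ, g (s • u + v) := by
        simp only [g, radonTransform, inner_smul_add_orthogonal hu, integral_mul_const]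
    _ = ∫ x, g x := (integral_eq_integral_integral_smul_add_orthogonal hg hu).symm
    _ = 0 := integral_mul_eval_inner_eq_zero hf u q
end
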